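/- arXiv:2001.10441 — 9 statements merged into one kernel-verified Lean document; each statement's English description precedes it below -/
import Mathlib

section
/- A norm ⦀·⦀ on ℝ^d is orthant-monotonic if and only if it is increasing with the coordinate subspaces, i.e., for every x ∈ ℝ^d and all subsets J ⊆ K ⊆ {1,…,d} one has ⦀x_J⦀ ≤ ⦀x_K⦀. -/
open Finset Set

namespace OSMPaper

variable {d : ℕ}

/-- Standard inner product on `ℝ^d = Fin d → ℝ`. -/
def dot (x y : Fin d → ℝ) : ℝ := ∑ i, x i * y i

/-- `N` is a norm on `ℝ^d`. -/
def IsNorm (N : (Fin d → ℝ) → ℝ) : Prop :=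
  (∀ x, 0 ≤ N x) ∧ (∀ x, N x = 0 ↔ x = 0) ∧
  (∀ (c : ℝ) (x : Fin d → ℝ), N (c • x) = |c| * N x) ∧
  (∀ x y, N (x + y) ≤ N x + N y)

/-- `proj K x = x_K`, the vector coinciding with `x` on `K` and zero outside `K`. -/
def proj (K : Finset (Fin d)) (x : Fin d → ℝ) : Fin d → ℝ :=
  fun i => if i ∈ K then x i else 0

/-- The coordinate subspace `ℝ_K`. -/
def coordSubspace (K : Finset (Fin d)) : Set (Fin d → ℝ) :=
  {x | ∀ j, j ∉ K → x j = 0}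

/-- Orthant-monotonic norm. -/
def OrthantMonotonic (N : (Fin d → ℝ) → ℝ) : Prop :=
  ∀ x x' : Fin d → ℝ, (∀ i, |x i| ≤ |x' i|) → (∀ i, 0 ≤ x i * x' i) → N x ≤ N x'

/-- Orthant-strictly monotonic norm. -/
def OrthantStrictlyMonotonic (N : (Fin d → ℝ) → ℝ) : Prop :=
  ∀ x x' : Fin d → ℝ, (∀ i, |x i| ≤ |x' i|) → (∃ j, |x j| < |x' j|) →
    (∀ i, 0 ≤ x i * x' i) → N x < N x'

/-- Dual norm `⦀y⦀⋆ = sup_{N x ≤ 1} ⟨x, y⟩`. -/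
noncomputable def dualNorm (N : (Fin d → ℝ) → ℝ) (y : Fin d → ℝ) : ℝ :=
  sSup {r | ∃ x, N x ≤ 1 ∧ r = dot x y}

/-- Support function of a set `S`. -/
noncomputable def suppFn (S : Set (Fin d → ℝ)) (y : Fin d → ℝ) : ℝ :=
  sSup {r | ∃ x ∈ S, r = dot x y}

/-- Generalized top-`k` norm associated with the source norm `N`. -/
noncomputable def topNorm (N : (Fin d → ℝ) → ℝ) (k : ℕ) (x : Fin d → ℝ) : ℝ :=
  sSup {r | ∃ K : Finset (Fin d), K.card ≤ k ∧ r = N (proj K x)}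

/-- Generalized `k`-support norm: the dual norm of the generalized top-`k` norm. -/
noncomputable def supportNorm (N : (Fin d → ℝ) → ℝ) (k : ℕ) : (Fin d → ℝ) → ℝ :=
  dualNorm (topNorm N k)

/-- The ℓ0 pseudonorm: the number of nonzero components. -/
noncomputable def l0 (x : Fin d → ℝ) : ℕ := Set.ncard {i | x i ≠ 0}

/-- `x` is an extreme point of the convex set `C`. -/
def ExtremePt (C : Set (Fin d → ℝ)) (x : Fin d → ℝ) : Prop :=
  x ∈ C ∧ ∀ y ∈ C, ∀ z ∈ C, ∀ t : ℝ, 0 < t → t < 1 →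
    x = t • y + (1 - t) • z → y = x ∧ z = x

/-! A norm that does not grow when a single coordinate is set to zero is orthant-monotonic:
shrinking one coordinate of `v` towards zero, within its sign, gives a convex combination
of `v` and `v` with that coordinate zeroed, and an orthant-monotone change of `x'` into `x`
is a sequence of such one-coordinate moves. Conversely `x_J` and `x_K` satisfy the
hypotheses of orthant-monotonicity whenever `J ⊆ K`. -/

lemma exists_mem_Icc_eq_mul_of_abs_le_of_mul_nonneg {a b : ℝ} (habs : |a| ≤ |b|)
    (hsign : 0 ≤ a * b) : ∃ t ∈ Icc (0 : ℝ) 1, a = t * b := by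
  rcases eq_or_ne b 0 with rfl | hb
  · exact ⟨0, left_mem_Icc.2 zero_le_one, by simpa using habs⟩
  refine ⟨a / b, ⟨?_, ?_⟩, (div_mul_cancel₀ a hb).symm⟩
  · rw [← mul_div_mul_right a b hb]
    exact div_nonneg hsign (mul_self_nonneg b)
  · exact (le_abs_self _).trans (by rw [abs_div]; exact div_le_one_of_le₀ habs (abs_nonneg b))

lemma proj_univ (x : Fin d → ℝ) : proj univ x = x := by
  ext i; simp [proj]

lemma proj_univ_erase (x : Fin d → ℝ) (i : Fin d) :
    proj (univ.erase i) x = Function.update x i 0 := by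
  ext j; by_cases hj : j = i <;> simp [proj, hj]

namespace IsNorm

variable {N : (Fin d → ℝ) → ℝ}

lemma update_le_of_update_zero_le (hN : IsNorm N)
    (hzero : ∀ v i, N (Function.update v i 0) ≤ N v) {v : Fin d → ℝ} {i : Fin d} {a : ℝ}
    (habs : |a| ≤ |v i|) (hsign : 0 ≤ a * v i) : N (Function.update v i a) ≤ N v := by
  obtain ⟨-, -, hsmul, htri⟩ := hN
  obtain ⟨t, ⟨ht0, ht1⟩, rfl⟩ := exists_mem_Icc_eq_mul_of_abs_le_of_mul_nonneg habs hsign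
  have hcomb : Function.update v i (t * v i) = t • v + (1 - t) • Function.update v i 0 := by
    ext j; by_cases hj : j = i
    · subst hj; simp
    · simp only [Function.update_of_ne hj, Pi.add_apply, Pi.smul_apply, smul_eq_mul]
      ring
  calc N (Function.update v i (t * v i))
      ≤ N (t • v) + N ((1 - t) • Function.update v i 0) := hcomb ▸ htri _ _
    _ = t * N v + (1 - t) * N (Function.update v i 0) := by
      rw [hsmul, hsmul, abs_of_nonneg ht0, abs_of_nonneg (sub_nonneg.2 ht1)]
    _ ≤ t * N v + (1 - t) * N v := by gcongr; exact hzero v i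
    _ = N v := by ring

lemma orthantMonotonic_of_update_zero_le (hN : IsNorm N)
    (hzero : ∀ v i, N (Function.update v i 0) ≤ N v) : OrthantMonotonic N := by
  intro x x' habs hsign
  have hstep : ∀ S : Finset (Fin d), N (S.piecewise x x') ≤ N x' := by
    intro S
    induction S using Finset.induction_on with
    | empty => simp
    | insert a S ha ih =>
      rw [Finset.piecewise_insert]
      have hx'a : S.piecewise x x' a = x' a := Finset.piecewise_eq_of_notMem _ _ _ ha
      exact (hN.update_le_of_update_zero_le hzero (hx'a ▸ habs a) (hx'a ▸ hsign a)).trans ih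
  simpa using hstep univ

end IsNorm

lemma OrthantMonotonic.proj_le_proj {N : (Fin d → ℝ) → ℝ} (hN : OrthantMonotonic N)
    (x : Fin d → ℝ) {J K : Finset (Fin d)} (hJK : J ⊆ K) : N (proj J x) ≤ N (proj K x) := by
  have hK : ∀ i ∈ J, i ∈ K := fun _ hi => hJK hi
  refine hN _ _ (fun i => ?_) (fun i => ?_) <;> by_cases hJ : i ∈ J <;>
    simp [proj, hJ, hK i, mul_self_nonneg]

theorem orthantMonotonic_iff_increasing_with_coord_subspaces_general
    (N : (Fin d → ℝ) → ℝ) (hN : IsNorm N) :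
    OrthantMonotonic N ↔
      ∀ (x : Fin d → ℝ) (J K : Finset (Fin d)), J ⊆ K →
        N (proj J x) ≤ N (proj K x) := by
  refine ⟨fun hOM x J K hJK => hOM.proj_le_proj x hJK, fun hmono => ?_⟩
  refine hN.orthantMonotonic_of_update_zero_le fun v i => ?_
  simpa only [proj_univ_erase, proj_univ] using hmono v _ _ (subset_univ (univ.erase i))

/-- a norm is orthant-monotonic iff it is increasing with the
coordinate subspaces. -/
theorem orthantMonotonic_iff_increasing_with_coord_subspaces
    (hd : 0 < d) (N : (Fin d → ℝ) → ℝ) (hN : IsNorm N) :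
    OrthantMonotonic N ↔
      ∀ (x : Fin d → ℝ) (J K : Finset (Fin d)), J ⊆ K →
        N (proj J x) ≤ N (proj K x) :=
  orthantMonotonic_iff_increasing_with_coord_subspaces_general N hN

end OSMPaper
end

section
/- A norm ⦀·⦀ on ℝ^d is orthant-monotonic if and only if for every subset K ⊆ {1,…,d} the image of the unit ball under the orthogonal projection π_K equals the intersection of the coordinate subspace ℝ_K with the unit ball, i.e., π_K(B) = ℝ_K ∩ B, where B = {x ∈ ℝ^d : ⦀x⦀ ≤ 1}. -/
open Finset Set

namespace OSMPaper

variable {d : ℕ}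

/-- a norm is orthant-monotonic iff `π_K(B) = ℝ_K ∩ B` for all `K`. -/
theorem orthantMonotonic_iff_proj_unitBall
    (hd : 0 < d) (N : (Fin d → ℝ) → ℝ) (hN : IsNorm N) :
    OrthantMonotonic N ↔
      ∀ K : Finset (Fin d),
        proj K '' {x | N x ≤ 1} = coordSubspace K ∩ {x | N x ≤ 1} := by
  obtain ⟨hpos, hzero, hsmul, htri⟩ := hN
  constructor
  · intro hOM K
    ext y
    constructor
    · rintro ⟨x, hx, rfl⟩
      refine ⟨fun j hj => by simp [proj, hj], ?_⟩
      exact le_trans (hOM _ _ (fun i => by by_cases h : i ∈ K <;> simp [proj, h, abs_nonneg])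
        (fun i => by by_cases h : i ∈ K <;> simp [proj, h, mul_self_nonneg])) hx
    · rintro ⟨h1, h2⟩
      exact ⟨y, h2, funext fun i => by
        by_cases h : i ∈ K
        · simp [proj, h]
        · simp [proj, h, h1 i h]⟩
  · intro hP
    have key : ∀ (K : Finset (Fin d)) (z : Fin d → ℝ), N (proj K z) ≤ N z := by
      intro K z
      rcases eq_or_ne z 0 with rfl | hz
      · have h0 : proj K (0 : Fin d → ℝ) = 0 := funext fun i => by simp [proj]
        simp [h0]
      · have hNz : 0 < N z :=
          lt_of_le_of_ne (hpos z) (fun h => hz ((hzero z).1 h.symm))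
        have hu : N ((N z)⁻¹ • z) ≤ 1 := by
          rw [hsmul, abs_of_pos (inv_pos.2 hNz), inv_mul_cancel₀ hNz.ne']
        have hmem : proj K ((N z)⁻¹ • z) ∈ proj K '' {x | N x ≤ 1} := ⟨_, hu, rfl⟩
        rw [hP K] at hmem
        have hpK : proj K ((N z)⁻¹ • z) = (N z)⁻¹ • proj K z := by
          funext i; by_cases h : i ∈ K <;> simp [proj, h]
        have h2 : N ((N z)⁻¹ • proj K z) ≤ 1 := by
          have := hmem.2; rw [hpK] at this; exact this
        rw [hsmul, abs_of_pos (inv_pos.2 hNz)] at h2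
        have h2' : (N z)⁻¹ * N (proj K z) ≤ 1 := h2
        calc N (proj K z) = N z * ((N z)⁻¹ * N (proj K z)) := by field_simp
        _ ≤ N z * 1 := by nlinarith
        _ = N z := mul_one _
    have step : ∀ (z : Fin d → ℝ) (j : Fin d) (t : ℝ), 0 ≤ t → t ≤ 1 →
        N (Function.update z j (t * z j)) ≤ N z := by
      intro z j t ht0 ht1
      have hdecomp : Function.update z j (t * z j)
          = t • z + (1 - t) • proj (Finset.univ.erase j) z := by
        funext i
        by_cases h : i = j
        · subst h; simp [proj]
        · simp only [Function.update_of_ne h, proj, Finset.mem_erase, h,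
            Finset.mem_univ, and_true, if_pos, Pi.add_apply, Pi.smul_apply,
            smul_eq_mul, ne_eq, not_false_eq_true]
          ring
      rw [hdecomp]
      calc N _ ≤ N (t • z) + N ((1-t) • proj (Finset.univ.erase j) z) := htri _ _
      _ = t * N z + (1 - t) * N (proj (Finset.univ.erase j) z) := by
          rw [hsmul, hsmul, abs_of_nonneg ht0, abs_of_nonneg (by linarith)]
      _ ≤ t * N z + (1 - t) * N z := by
          nlinarith [key (Finset.univ.erase j) z, hpos z]
      _ = N z := by ring
    intro x x' habs hsign
    have ht : ∀ i, ∃ t : ℝ, 0 ≤ t ∧ t ≤ 1 ∧ x i = t * x' i := by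
      intro i
      rcases eq_or_ne (x' i) 0 with h | h
      · refine ⟨0, le_refl _, zero_le_one, ?_⟩
        have h1 := habs i
        rw [h] at h1; simp only [abs_zero] at h1
        have : x i = 0 := abs_eq_zero.1 (le_antisymm h1 (abs_nonneg _))
        simp [this]
      · refine ⟨x i / x' i, ?_, ?_, by field_simp⟩
        · have hrw : x i / x' i = x i * x' i / (x' i)^2 := by
            field_simp
          rw [hrw]
          exact div_nonneg (hsign i) (sq_nonneg _)
        · have h1 : |x i| / |x' i| ≤ 1 :=
            (div_le_one (abs_pos.2 h)).2 (habs i)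
          calc x i / x' i ≤ |x i / x' i| := le_abs_self _
          _ = |x i| / |x' i| := abs_div _ _
          _ ≤ 1 := h1
    have main : ∀ m : ℕ, N (fun i : Fin d => if (i:ℕ) < m then x i else x' i) ≤ N x' := by
      intro m
      induction m with
      | zero => simp
      | succ m ih =>
        by_cases hm : m < d
        · set j : Fin d := ⟨m, hm⟩ with hj
          obtain ⟨t, ht0, ht1, htx⟩ := ht j
          have heq : (fun i : Fin d => if (i:ℕ) < m+1 then x i else x' i)
              = Function.update (fun i : Fin d => if (i:ℕ) < m then x i else x' i) j
                  (t * (fun i : Fin d => if (i:ℕ) < m then x i else x' i) j) := by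
            funext i
            by_cases h : i = j
            · subst h
              have hjm : ((j:ℕ) : ℕ) = m := rfl
              simp only [Function.update_self]
              rw [if_pos (by omega : (j:ℕ) < m+1), if_neg (by omega : ¬ (j:ℕ) < m)]
              exact htx
            · rw [Function.update_of_ne h]
              have hne : (i:ℕ) ≠ m := fun hc => h (Fin.ext hc)
              by_cases h2 : (i:ℕ) < m
              · rw [if_pos (by omega : (i:ℕ) < m+1), if_pos h2]
              · rw [if_neg (by omega : ¬ (i:ℕ) < m+1), if_neg h2]
          rw [heq]
          exact le_trans (step _ j t ht0 ht1) ih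
        · have heq : (fun i : Fin d => if (i:ℕ) < m+1 then x i else x' i)
              = (fun i : Fin d => if (i:ℕ) < m then x i else x' i) := by
            funext i
            have h1 : (i:ℕ) < m := lt_of_lt_of_le i.isLt (le_of_not_gt hm)
            rw [if_pos (by omega : (i:ℕ) < m+1), if_pos h1]
          rw [heq]; exact ih
    have hfin := main d
    have hx : (fun i : Fin d => if (i:ℕ) < d then x i else x' i) = x :=
      funext fun i => by simp [i.isLt]
    rwa [hx] at hfin

end OSMPaper
end

section
/- A norm ⦀·⦀ on ℝ^d is orthant-strictly monotonic if and only if the family of coordinate subspaces is strictly Birkhoff orthogonal, i.e., for every subset K ⊆ {1,…,d}, every u ∈ ℝ_K and every v ∈ ℝ_{K^c} with v ≠ 0 (where K^c is the complement of K in {1,…,d}), one has ⦀u + v⦀ > ⦀u⦀. -/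
open Finset Set

namespace OSMPaper

variable {d : ℕ}

lemma step_lemma {N : (Fin d → ℝ) → ℝ} (hN : IsNorm N)
    (hB : ∀ (K : Finset (Fin d)) (u v : Fin d → ℝ),
        u ∈ coordSubspace K → v ∈ coordSubspace Kᶜ → v ≠ 0 →
        N u < N (u + v))
    (x : Fin d → ℝ) (j : Fin d) (t : ℝ)
    (h1 : |x j| ≤ |t|) (h2 : 0 ≤ x j * t) :
    N x ≤ N (Function.update x j t) ∧
      (|x j| < |t| → N x < N (Function.update x j t)) := by
  obtain ⟨hpos, hzero, hhom, htri⟩ := hN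
  by_cases ht : t = 0
  · subst ht
    have hxj : x j = 0 := by
      have := abs_nonneg (x j); simp only [abs_zero] at h1
      nlinarith [abs_nonneg (x j), abs_eq_zero.mp (le_antisymm h1 (abs_nonneg (x j)))]
    have : Function.update x j 0 = x := by
      funext i
      by_cases hi : i = j
      · subst hi; simp [hxj]
      · simp [Function.update_of_ne hi]
    rw [this]
    constructor
    · exact le_refl _
    · intro h; simp at h; exact absurd h (by simp [hxj])
  · set u : Fin d → ℝ := Function.update x j 0 with hu
    set a : Fin d → ℝ := Function.update x j t with ha
    set v : Fin d → ℝ := fun i => if i = j then t else 0 with hv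
    have huv : u + v = a := by
      funext i
      by_cases hi : i = j
      · subst hi; simp [hu, ha, hv]
      · simp [hu, ha, hv, Function.update_of_ne hi, hi]
    have hNu_lt : N u < N a := by
      rw [← huv]
      apply hB ({j}ᶜ) u v
      · intro k hk
        simp only [Finset.mem_compl, Finset.mem_singleton, not_not] at hk
        subst hk; simp [hu]
      · intro k hk
        simp only [compl_compl, Finset.mem_singleton] at hk
        simp [hv, hk]
      · intro h
        have := congrFun h j
        simp [hv] at this
        exact ht this
    set lam : ℝ := x j / t with hlam
    have hlam0 : 0 ≤ lam := by
      rw [hlam, div_nonneg_iff]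
      rcases (mul_nonneg_iff.mp h2) with ⟨h, h'⟩ | ⟨h, h'⟩
      · left; exact ⟨h, lt_of_le_of_ne h' (Ne.symm ht) |>.le⟩
      · right; exact ⟨h, h'⟩
    have habslam : |lam| = |x j| / |t| := by rw [hlam, abs_div]
    have htpos : 0 < |t| := abs_pos.mpr ht
    have hlam1 : lam ≤ 1 := by
      calc lam ≤ |lam| := le_abs_self _
        _ ≤ 1 := by rw [habslam]; exact div_le_one_of_le₀ h1 (le_of_lt htpos)
    have hlamt : lam * t = x j := div_mul_cancel₀ _ ht
    have hdecomp : x = lam • a + (1 - lam) • u := by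
      funext i
      by_cases hi : i = j
      · subst hi
        simp [ha, hu, hlamt]
      · simp [ha, hu, Function.update_of_ne hi]
        ring
    have hconv : N x ≤ lam * N a + (1 - lam) * N u := by
      rw [hdecomp]
      calc N (lam • a + (1 - lam) • u) ≤ N (lam • a) + N ((1 - lam) • u) := htri _ _
        _ = |lam| * N a + |1 - lam| * N u := by rw [hhom, hhom]
        _ = lam * N a + (1 - lam) * N u := by
            rw [abs_of_nonneg hlam0, abs_of_nonneg (by linarith)]
    constructor
    · calc N x ≤ lam * N a + (1 - lam) * N u := hconv
        _ ≤ lam * N a + (1 - lam) * N a := by nlinarith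
        _ = N a := by ring
    · intro hstrict
      have hlamlt : lam < 1 := by
        calc lam ≤ |lam| := le_abs_self _
          _ < 1 := by rw [habslam]; exact (div_lt_one htpos).mpr hstrict
      calc N x ≤ lam * N a + (1 - lam) * N u := hconv
        _ < lam * N a + (1 - lam) * N a := by nlinarith
        _ = N a := by ring

lemma mono_lemma {N : (Fin d → ℝ) → ℝ} (hN : IsNorm N)
    (hB : ∀ (K : Finset (Fin d)) (u v : Fin d → ℝ),
        u ∈ coordSubspace K → v ∈ coordSubspace Kᶜ → v ≠ 0 →
        N u < N (u + v))
    (x x' : Fin d → ℝ) (h1 : ∀ i, |x i| ≤ |x' i|) (h2 : ∀ i, 0 ≤ x i * x' i)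
    (S : Finset (Fin d)) :
    N x ≤ N (fun i => if i ∈ S then x' i else x i) := by
  classical
  induction S using Finset.induction with
  | empty => simpa using le_refl (N x)
  | @insert j S hj ih =>
    set y : Fin d → ℝ := fun i => if i ∈ S then x' i else x i with hy
    have hupdate : (fun i => if i ∈ insert j S then x' i else x i)
        = Function.update y j (x' j) := by
      funext i
      by_cases hi : i = j
      · subst hi; simp [hy, hj]
      · simp [hy, Function.update_of_ne hi, Finset.mem_insert, hi]
    rw [hupdate]
    have hyj : y j = x j := by simp [hy, hj]
    have := step_lemma hN hB y j (x' j) (by rw [hyj]; exact h1 j)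
      (by rw [hyj]; exact h2 j)
    exact le_trans ih this.1

/-- a norm is orthant-strictly monotonic iff the family of
coordinate subspaces is strictly Birkhoff orthogonal. -/
theorem orthantStrictlyMonotonic_iff_strictBirkhoff
    (hd : 0 < d) (N : (Fin d → ℝ) → ℝ) (hN : IsNorm N) :
    OrthantStrictlyMonotonic N ↔
      ∀ (K : Finset (Fin d)) (u v : Fin d → ℝ),
        u ∈ coordSubspace K → v ∈ coordSubspace Kᶜ → v ≠ 0 →
        N u < N (u + v) := by
  constructor
  · intro hOSM K u v hu hv hvne
    apply hOSM u (u + v)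
    · intro i
      by_cases hi : i ∈ K
      · have : v i = 0 := hv i (by simpa using hi)
        simp [this]
      · have : u i = 0 := hu i hi
        simp [this]
    · obtain ⟨j, hj⟩ : ∃ j, v j ≠ 0 := by
        by_contra h
        push_neg at h
        exact hvne (funext h)
      refine ⟨j, ?_⟩
      have hjK : j ∉ K := fun hjK => hj (hv j (by simpa using hjK))
      have : u j = 0 := hu j hjK
      simp [this, abs_pos.mpr hj]
    · intro i
      by_cases hi : i ∈ K
      · have : v i = 0 := hv i (by simpa using hi)
        simp [this]; exact mul_self_nonneg _
      · have : u i = 0 := hu i hi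
        simp [this]
  · intro hB x x' h1 ⟨j, hj⟩ h2
    set x₀ : Fin d → ℝ := Function.update x j (x' j) with hx0
    have hstep := step_lemma hN hB x j (x' j) (h1 j) (h2 j)
    have h1' : ∀ i, |x₀ i| ≤ |x' i| := by
      intro i
      by_cases hi : i = j
      · subst hi; simp [hx0]
      · simp [hx0, Function.update_of_ne hi]; exact h1 i
    have h2' : ∀ i, 0 ≤ x₀ i * x' i := by
      intro i
      by_cases hi : i = j
      · subst hi; simp [hx0]; exact mul_self_nonneg _
      · simp [hx0, Function.update_of_ne hi]; exact h2 i
    have hmono := mono_lemma hN hB x₀ x' h1' h2' Finset.univ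
    simp only [Finset.mem_univ, if_true] at hmono
    exact lt_of_lt_of_le (hstep.2 hj) hmono

end OSMPaper
end

section
/- A norm ⦀·⦀ on ℝ^d is orthant-strictly monotonic if and only if it is strictly increasing with the coordinate subspaces, i.e., for every x ∈ ℝ^d and all subsets J ⊊ K ⊆ {1,…,d}, if x_J ≠ x_K then ⦀x_J⦀ < ⦀x_K⦀. -/
/-!
The forward direction is the special case `x = x_J`, `x' = x_K`. Conversely, to get orthant-strict
monotonicity it suffices to shrink one coordinate at a time. Shrinking the `i`-th
coordinate of `z` to `a` (same sign, `|a| ≤ |z i|`) gives the convex combination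
`μ • z + (1 - μ) • z_{∁{i}}` with `μ = a / z i ∈ [0, 1]`, so by the triangle inequality its norm
is at most `μ N z + (1 - μ) N z_{∁{i}}`, and strict increase along `∁{i} ⊂ univ` gives
`N z_{∁{i}} ≤ N z`, strictly when `z i ≠ 0`.
-/

open Finset Set

namespace OSMPaper

variable {d : ℕ}

def StrictlyIncreasingWithCoordSubspaces (N : (Fin d → ℝ) → ℝ) : Prop :=
  ∀ (x : Fin d → ℝ) (J K : Finset (Fin d)), J ⊂ K →
    proj J x ≠ proj K x → N (proj J x) < N (proj K x)

lemma proj_apply_eq_or_eq_zero {J K : Finset (Fin d)} (hJK : J ⊆ K) (x : Fin d → ℝ) (i : Fin d) :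
    proj J x i = proj K x i ∨ proj J x i = 0 := by
  by_cases hi : i ∈ J
  · simp [proj, hi, hJK hi]
  · simp [proj, hi]

lemma IsNorm.apply_convex_comb_le {N : (Fin d → ℝ) → ℝ} (hN : IsNorm N) (x y : Fin d → ℝ)
    {μ : ℝ} (hμ₀ : 0 ≤ μ) (hμ₁ : μ ≤ 1) :
    N (μ • x + (1 - μ) • y) ≤ μ * N x + (1 - μ) * N y := by
  obtain ⟨-, -, hsmul, htri⟩ := hN
  calc N (μ • x + (1 - μ) • y) ≤ N (μ • x) + N ((1 - μ) • y) := htri _ _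
    _ = μ * N x + (1 - μ) * N y := by
      rw [hsmul, hsmul, abs_of_nonneg hμ₀, abs_of_nonneg (sub_nonneg.mpr hμ₁)]

/-- The junk value `a / 0 = 0` makes this hold also when `z i = 0`. -/
lemma update_eq_smul_add_smul_proj_erase (z : Fin d → ℝ) (i : Fin d) {a : ℝ}
    (ha : z i = 0 → a = 0) :
    Function.update z i a = (a / z i) • z + (1 - a / z i) • proj (univ.erase i) z := by
  funext k
  by_cases hk : k = i
  · subst hk
    simp [proj, div_mul_cancel_of_imp ha]
  · simp [proj, hk]
    ring

lemma IsNorm.apply_update_le {N : (Fin d → ℝ) → ℝ} (hN : IsNorm N) (z : Fin d → ℝ) (i : Fin d)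
    {a : ℝ} (habs : |a| ≤ |z i|) (hsign : 0 ≤ a * z i) :
    N (Function.update z i a) ≤
      a / z i * N z + (1 - a / z i) * N (proj (univ.erase i) z) := by
  have hμ₀ : 0 ≤ a / z i := div_nonneg_iff.mpr (mul_nonneg_iff.mp hsign)
  have hμ₁ : a / z i ≤ 1 :=
    (le_abs_self _).trans (abs_div a (z i) ▸ div_le_one_of_le₀ habs (abs_nonneg (z i)))
  have ha : z i = 0 → a = 0 := fun hz => abs_nonpos_iff.mp (by simpa [hz] using habs)
  rw [update_eq_smul_add_smul_proj_erase z i ha]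
  exact hN.apply_convex_comb_le _ _ hμ₀ hμ₁

lemma StrictlyIncreasingWithCoordSubspaces.apply_proj_erase_lt {N : (Fin d → ℝ) → ℝ}
    (H : StrictlyIncreasingWithCoordSubspaces N) {z : Fin d → ℝ} {i : Fin d} (hz : z i ≠ 0) :
    N (proj (univ.erase i) z) < N z := by
  have hne : proj (univ.erase i) z ≠ proj univ z := by
    rw [proj_univ]
    exact fun h => hz (by simpa [proj] using (congrFun h i).symm)
  simpa [proj_univ] using H z _ _ (erase_ssubset (mem_univ i)) hne

lemma StrictlyIncreasingWithCoordSubspaces.apply_proj_erase_le {N : (Fin d → ℝ) → ℝ}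
    (H : StrictlyIncreasingWithCoordSubspaces N) (z : Fin d → ℝ) (i : Fin d) :
    N (proj (univ.erase i) z) ≤ N z := by
  by_cases hz : z i = 0
  · have : proj (univ.erase i) z = z := by
      funext k
      by_cases hk : k = i <;> simp [proj, hk, hz]
    rw [this]
  · exact (H.apply_proj_erase_lt hz).le

lemma StrictlyIncreasingWithCoordSubspaces.apply_update_le {N : (Fin d → ℝ) → ℝ}
    (hN : IsNorm N) (H : StrictlyIncreasingWithCoordSubspaces N) (z : Fin d → ℝ) (i : Fin d)
    {a : ℝ} (habs : |a| ≤ |z i|) (hsign : 0 ≤ a * z i) :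
    N (Function.update z i a) ≤ N z := by
  have hμ₁ : a / z i ≤ 1 :=
    (le_abs_self _).trans (abs_div a (z i) ▸ div_le_one_of_le₀ habs (abs_nonneg (z i)))
  calc N (Function.update z i a)
      ≤ a / z i * N z + (1 - a / z i) * N (proj (univ.erase i) z) :=
        hN.apply_update_le z i habs hsign
    _ ≤ a / z i * N z + (1 - a / z i) * N z := by
      gcongr
      exact H.apply_proj_erase_le z i
    _ = N z := by ring

lemma StrictlyIncreasingWithCoordSubspaces.apply_update_lt {N : (Fin d → ℝ) → ℝ}
    (hN : IsNorm N) (H : StrictlyIncreasingWithCoordSubspaces N) (z : Fin d → ℝ) (i : Fin d)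
    {a : ℝ} (habs : |a| < |z i|) (hsign : 0 ≤ a * z i) :
    N (Function.update z i a) < N z := by
  have hz : z i ≠ 0 := abs_pos.mp ((abs_nonneg a).trans_lt habs)
  have hμ₁ : a / z i < 1 :=
    (le_abs_self _).trans_lt (abs_div a (z i) ▸ (div_lt_one (abs_pos.mpr hz)).mpr habs)
  calc N (Function.update z i a)
      ≤ a / z i * N z + (1 - a / z i) * N (proj (univ.erase i) z) :=
        hN.apply_update_le z i habs.le hsign
    _ < a / z i * N z + (1 - a / z i) * N z := by
      gcongr
      exact H.apply_proj_erase_lt hz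
    _ = N z := by ring

lemma orthantMonotonic_of_apply_update_le {N : (Fin d → ℝ) → ℝ}
    (h : ∀ z i a, |a| ≤ |z i| → 0 ≤ a * z i → N (Function.update z i a) ≤ N z) :
    OrthantMonotonic N := by
  intro x x' habs hsign
  suffices ∀ S : Finset (Fin d), N (S.piecewise x x') ≤ N x' by simpa using this univ
  intro S
  induction S using Finset.induction_on with
  | empty => simp
  | insert i S hi ih =>
    rw [Finset.piecewise_insert]
    refine (h _ i (x i) ?_ ?_).trans ih <;> rw [Finset.piecewise_eq_of_notMem _ _ _ hi]
    exacts [habs i, hsign i]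

/-- Shrink the coordinate where the inequality is strict first, then the others. -/
lemma OrthantMonotonic.orthantStrictlyMonotonic {N : (Fin d → ℝ) → ℝ} (hmono : OrthantMonotonic N)
    (h : ∀ z i a, |a| < |z i| → 0 ≤ a * z i → N (Function.update z i a) < N z) :
    OrthantStrictlyMonotonic N := by
  rintro x x' habs ⟨j, hj⟩ hsign
  calc N x ≤ N (Function.update x' j (x j)) := by
        refine hmono _ _ (fun i => ?_) (fun i => ?_) <;> by_cases hij : i = j
        · simp [hij]
        · simpa [hij] using habs i
        · simpa [hij] using mul_self_nonneg (x j)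
        · simpa [hij] using hsign i
    _ < N x' := h x' j (x j) hj (hsign j)

lemma OrthantStrictlyMonotonic.strictlyIncreasingWithCoordSubspaces {N : (Fin d → ℝ) → ℝ}
    (h : OrthantStrictlyMonotonic N) : StrictlyIncreasingWithCoordSubspaces N := by
  intro x J K hJK hne
  have hcases := proj_apply_eq_or_eq_zero hJK.subset x
  refine h _ _ (fun i => ?_) ?_ (fun i => ?_)
  · rcases hcases i with hi | hi <;> simp [hi]
  · obtain ⟨j, hj⟩ := Function.ne_iff.mp hne
    refine ⟨j, ?_⟩
    rcases hcases j with hj' | hj'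
    · exact absurd hj' hj
    · rw [hj'] at hj ⊢
      simpa using hj.symm
  · rcases hcases i with hi | hi <;> simp [hi, mul_self_nonneg]

theorem orthantStrictlyMonotonic_iff_strictly_increasing_with_coord_subspaces_general
    (N : (Fin d → ℝ) → ℝ) (hN : IsNorm N) :
    OrthantStrictlyMonotonic N ↔
      ∀ (x : Fin d → ℝ) (J K : Finset (Fin d)), J ⊂ K →
        proj J x ≠ proj K x → N (proj J x) < N (proj K x) :=
  ⟨OrthantStrictlyMonotonic.strictlyIncreasingWithCoordSubspaces,
    fun (H : StrictlyIncreasingWithCoordSubspaces N) =>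
      (orthantMonotonic_of_apply_update_le fun z i _ => H.apply_update_le hN z i)
        |>.orthantStrictlyMonotonic fun z i _ => H.apply_update_lt hN z i⟩

/-- a norm is orthant-strictly monotonic iff it is strictly
increasing with the coordinate subspaces. -/
theorem orthantStrictlyMonotonic_iff_strictly_increasing_with_coord_subspaces
    (hd : 0 < d) (N : (Fin d → ℝ) → ℝ) (hN : IsNorm N) :
    OrthantStrictlyMonotonic N ↔
      ∀ (x : Fin d → ℝ) (J K : Finset (Fin d)), J ⊂ K →
        proj J x ≠ proj K x → N (proj J x) < N (proj K x) :=
  orthantStrictlyMonotonic_iff_strictly_increasing_with_coord_subspaces_general N hN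

end OSMPaper
end

section
/- A norm ⦀·⦀ on ℝ^d is orthant-strictly monotonic if and only if for every vector u ∈ ℝ^d with u ≠ 0 there exists a vector v ∈ ℝ^d with v ≠ 0 such that supp(v) = supp(u), u_i v_i ≥ 0 for all i, and ⟨u, v⟩ = ⦀u⦀ · ⦀v⦀⋆ (i.e., v is ⦀·⦀-dual to u). -/
open Finset Set

namespace OSMPaper

variable {d : ℕ}

/-!
If the norm is orthant-strictly monotonic, restrict a Hahn–Banach functional at `u` to the
support of `u`: orthant monotonicity keeps it dual to `u`, and since deleting a coordinate `i`
of `u` strictly decreases the norm, the restriction `v` satisfies `u i * v i > 0` there.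

Conversely, a dual vector `v` of `u` with the support and the orthant of `u` gives
`N u * ⦀v⦀⋆ = ⟨u, v⟩ ≤ ⟨u', v⟩ ≤ N u' * ⦀v⦀⋆` for every `u'` dominating `u` in its orthant.
For strictness, apply this to `x + x'`: its support is that of `x'`, so `⟨x, v⟩ < ⟨x', v⟩`.
-/

namespace IsNorm

variable {N : (Fin d → ℝ) → ℝ}

theorem nonneg (hN : IsNorm N) (x : Fin d → ℝ) : 0 ≤ N x := hN.1 x

theorem map_zero (hN : IsNorm N) : N 0 = 0 := (hN.2.1 0).mpr rfl

theorem pos (hN : IsNorm N) {x : Fin d → ℝ} (hx : x ≠ 0) : 0 < N x :=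
  (hN.nonneg x).lt_of_ne fun h => hx ((hN.2.1 x).mp h.symm)

theorem map_smul (hN : IsNorm N) (c : ℝ) (x : Fin d → ℝ) : N (c • x) = |c| * N x :=
  hN.2.2.1 c x

theorem add_le (hN : IsNorm N) (x y : Fin d → ℝ) : N (x + y) ≤ N x + N y := hN.2.2.2 x y

theorem inv_smul_self (hN : IsNorm N) {x : Fin d → ℝ} (hx : x ≠ 0) : N ((N x)⁻¹ • x) = 1 := by
  rw [hN.map_smul, abs_of_pos (inv_pos.mpr (hN.pos hx)), inv_mul_cancel₀ (hN.pos hx).ne']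

end IsNorm

section dot

theorem dot_smul_left (c : ℝ) (x y : Fin d → ℝ) : dot (c • x) y = c * dot x y := by
  simp [dot, Finset.mul_sum, mul_assoc]

theorem dot_add_left (x y z : Fin d → ℝ) : dot (x + y) z = dot x z + dot y z := by
  simp [dot, add_mul, Finset.sum_add_distrib]

theorem dot_update_zero_left (u v : Fin d → ℝ) (j : Fin d) :
    dot (Function.update u j 0) v = dot u v - u j * v j := by
  have h : Function.update u j 0 = u - Pi.single j (u j) := by
    ext i; by_cases hi : i = j <;> simp [hi, Function.update_of_ne]
  rw [h]
  simp [dot, sub_mul, Finset.sum_sub_distrib, Pi.single_apply]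

theorem dot_proj_right (K : Finset (Fin d)) (x y : Fin d → ℝ) :
    dot x (proj K y) = dot (proj K x) y := by
  refine Finset.sum_congr rfl fun i _ => ?_
  by_cases hi : i ∈ K <;> simp [proj, hi]

theorem proj_support_self (u : Fin d → ℝ) : proj {i | u i ≠ 0} u = u := by
  ext i
  by_cases hi : u i = 0 <;> simp [proj, hi]

theorem exists_dot_eq_linearMap (g : (Fin d → ℝ) →ₗ[ℝ] ℝ) : ∃ w, ∀ x, g x = dot x w :=
  ⟨fun i => g fun j => if i = j then 1 else 0, fun x => g.pi_apply_eq_sum_univ x⟩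

end dot

section pointwise

variable {a b v : ℝ}

theorem mul_nonneg_of_mul_nonneg_of_support (hab : 0 ≤ a * b) (hav : 0 ≤ a * v)
    (hv : a = 0 → v = 0) : 0 ≤ b * v := by
  rcases eq_or_ne a 0 with rfl | ha
  · simp [hv rfl]
  · have : 0 ≤ (a * b) * (a * v) := mul_nonneg hab hav
    have ha2 : 0 < a * a := mul_self_pos.mpr ha
    nlinarith

theorem mul_le_mul_of_abs_le_of_mul_nonneg (hab : 0 ≤ a * b) (habs : |a| ≤ |b|)
    (hbv : 0 ≤ b * v) : a * v ≤ b * v := by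
  rcases mul_nonneg_iff.mp hab with ⟨ha, hb⟩ | ⟨ha, hb⟩
  · rw [abs_of_nonneg ha, abs_of_nonneg hb] at habs
    rcases hb.eq_or_lt with rfl | hb
    · simp [show a = 0 by linarith]
    · nlinarith [nonneg_of_mul_nonneg_right hbv hb]
  · rw [abs_of_nonpos ha, abs_of_nonpos hb] at habs
    rcases hb.eq_or_lt with rfl | hb
    · simp [show a = 0 by linarith]
    · nlinarith [nonpos_of_mul_nonneg_right hbv hb]

theorem mul_lt_mul_of_abs_lt_of_mul_nonneg (hab : 0 ≤ a * b) (habs : |a| < |b|)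
    (hbv : 0 ≤ b * v) (hv : v ≠ 0) : a * v < b * v := by
  rcases mul_nonneg_iff.mp hab with ⟨ha, hb⟩ | ⟨ha, hb⟩
  · rw [abs_of_nonneg ha, abs_of_nonneg hb] at habs
    have hv' : 0 < v := (nonneg_of_mul_nonneg_right hbv (by linarith)).lt_of_ne' hv
    nlinarith
  · rw [abs_of_nonpos ha, abs_of_nonpos hb] at habs
    have hv' : v < 0 := (nonpos_of_mul_nonneg_right hbv (by linarith)).lt_of_ne hv
    nlinarith

theorem add_ne_zero_of_abs_lt (habs : |a| < |b|) : a + b ≠ 0 := by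
  intro h
  rw [eq_neg_of_add_eq_zero_left h, abs_neg] at habs
  exact habs.false

end pointwise

section dominated

variable {x x' v : Fin d → ℝ}

theorem dot_le_dot_of_abs_le (habs : ∀ i, |x i| ≤ |x' i|) (hsgn : ∀ i, 0 ≤ x i * x' i)
    (hv : ∀ i, 0 ≤ x' i * v i) : dot x v ≤ dot x' v :=
  Finset.sum_le_sum fun i _ => mul_le_mul_of_abs_le_of_mul_nonneg (hsgn i) (habs i) (hv i)

theorem dot_lt_dot_of_abs_lt (habs : ∀ i, |x i| ≤ |x' i|) (hsgn : ∀ i, 0 ≤ x i * x' i)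
    (hv : ∀ i, 0 ≤ x' i * v i) {j : Fin d} (hj : |x j| < |x' j|) (hvj : v j ≠ 0) :
    dot x v < dot x' v :=
  Finset.sum_lt_sum (fun i _ => mul_le_mul_of_abs_le_of_mul_nonneg (hsgn i) (habs i) (hv i))
    ⟨j, Finset.mem_univ j, mul_lt_mul_of_abs_lt_of_mul_nonneg (hsgn j) hj (hv j) hvj⟩

end dominated

section dualNorm

variable {N : (Fin d → ℝ) → ℝ} {u v y : Fin d → ℝ}

-- `Real.sSup` of an unbounded set is `0`, so this spares us comparing `N` with another norm.
theorem bddAbove_of_dualNorm_ne_zero (hy : dualNorm N y ≠ 0) :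
    BddAbove {r | ∃ x, N x ≤ 1 ∧ r = dot x y} := by
  by_contra h
  exact hy (Real.sSup_of_not_bddAbove h)

theorem inv_mul_dot_le_dualNorm (hN : IsNorm N) (hy : BddAbove {r | ∃ x, N x ≤ 1 ∧ r = dot x y})
    {x : Fin d → ℝ} (hx : x ≠ 0) : (N x)⁻¹ * dot x y ≤ dualNorm N y :=
  le_csSup hy ⟨(N x)⁻¹ • x, (hN.inv_smul_self hx).le, (dot_smul_left _ _ _).symm⟩

theorem dot_le_mul_dualNorm (hN : IsNorm N) (hy : 0 < dualNorm N y) (x : Fin d → ℝ) :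
    dot x y ≤ N x * dualNorm N y := by
  rcases eq_or_ne x 0 with rfl | hx
  · simp [dot, hN.map_zero]
  rw [← inv_mul_le_iff₀ (hN.pos hx)]
  exact inv_mul_dot_le_dualNorm hN (bddAbove_of_dualNorm_ne_zero hy.ne') hx

theorem dualNorm_eq_one (hN : IsNorm N) (hu : u ≠ 0) (huv : dot u v = N u)
    (hle : ∀ x, dot x v ≤ N x) : dualNorm N v = 1 := by
  have hbdd : BddAbove {r | ∃ x, N x ≤ 1 ∧ r = dot x v} :=
    ⟨1, by rintro r ⟨x, hx, rfl⟩; exact (hle x).trans hx⟩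
  refine le_antisymm (csSup_le ⟨_, 0, by simp [hN.map_zero], rfl⟩ ?_) ?_
  · rintro r ⟨x, hx, rfl⟩
    exact (hle x).trans hx
  · have := inv_mul_dot_le_dualNorm hN hbdd hu
    rwa [huv, inv_mul_cancel₀ (hN.pos hu).ne'] at this

theorem exists_dot_eq_and_forall_dot_le (hN : IsNorm N) (hu : u ≠ 0) :
    ∃ w, dot u w = N u ∧ ∀ x, dot x w ≤ N x := by
  let f : (Fin d → ℝ) →ₗ.[ℝ] ℝ := LinearPMap.mkSpanSingleton u (N u) hu
  have hf : ∀ z : f.domain, f z ≤ N z := by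
    rintro ⟨z, hz⟩
    obtain ⟨c, rfl⟩ := Submodule.mem_span_singleton.mp hz
    rw [LinearPMap.mkSpanSingleton'_apply, hN.map_smul, smul_eq_mul]
    exact mul_le_mul_of_nonneg_right (le_abs_self c) (hN.nonneg u)
  obtain ⟨g, hgf, hgN⟩ := exists_extension_of_le_sublinear f N
    (fun c hc x => by rw [hN.map_smul, abs_of_pos hc]) hN.add_le hf
  have hgu : g u = N u := by
    rw [hgf ⟨u, Submodule.mem_span_singleton_self u⟩]
    exact LinearPMap.mkSpanSingleton_apply ℝ ℝ hu (N u)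
  obtain ⟨w, hw⟩ := exists_dot_eq_linearMap g
  exact ⟨w, by rw [← hw, hgu], fun x => by rw [← hw]; exact hgN x⟩

end dualNorm

def IsAlignedDual (N : (Fin d → ℝ) → ℝ) (u v : Fin d → ℝ) : Prop :=
  v ≠ 0 ∧ {i | v i ≠ 0} = {i | u i ≠ 0} ∧ (∀ i, 0 ≤ u i * v i) ∧
    dot u v = N u * dualNorm N v

namespace IsAlignedDual

variable {N : (Fin d → ℝ) → ℝ} {u v : Fin d → ℝ}

theorem eq_zero_of_eq_zero (h : IsAlignedDual N u v) {i : Fin d} (hi : u i = 0) : v i = 0 := by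
  by_contra hvi
  exact (Set.ext_iff.mp h.2.1 i).mp hvi hi

theorem ne_zero_of_ne_zero (h : IsAlignedDual N u v) {i : Fin d} (hi : u i ≠ 0) : v i ≠ 0 :=
  (Set.ext_iff.mp h.2.1 i).mpr hi

theorem dot_pos (h : IsAlignedDual N u v) : 0 < dot u v := by
  obtain ⟨j, hj⟩ := Function.ne_iff.mp h.1
  have huj : u j ≠ 0 := (Set.ext_iff.mp h.2.1 j).mp hj
  exact Finset.sum_pos' (fun i _ => h.2.2.1 i)
    ⟨j, Finset.mem_univ j, (h.2.2.1 j).lt_of_ne' (mul_ne_zero huj hj)⟩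

theorem dualNorm_pos (hN : IsNorm N) (h : IsAlignedDual N u v) : 0 < dualNorm N v :=
  pos_of_mul_pos_right (h.2.2.2 ▸ h.dot_pos) (hN.nonneg u)

theorem mul_nonneg_of_mul_nonneg {b : Fin d → ℝ} (h : IsAlignedDual N u v)
    (hub : ∀ i, 0 ≤ u i * b i) (i : Fin d) : 0 ≤ b i * v i :=
  mul_nonneg_of_mul_nonneg_of_support (hub i) (h.2.2.1 i) h.eq_zero_of_eq_zero

theorem apply_le_of_abs_le (hN : IsNorm N) (h : IsAlignedDual N u v) {b : Fin d → ℝ}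
    (habs : ∀ i, |u i| ≤ |b i|) (hub : ∀ i, 0 ≤ u i * b i) : N u ≤ N b := by
  refine le_of_mul_le_mul_right ?_ (h.dualNorm_pos hN)
  calc N u * dualNorm N v = dot u v := h.2.2.2.symm
    _ ≤ dot b v := dot_le_dot_of_abs_le habs hub (h.mul_nonneg_of_mul_nonneg hub)
    _ ≤ N b * dualNorm N v := dot_le_mul_dualNorm hN (h.dualNorm_pos hN) b

end IsAlignedDual

section converse

variable {N : (Fin d → ℝ) → ℝ}

theorem orthantMonotonic_of_forall_isAlignedDual (hN : IsNorm N)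
    (H : ∀ u, u ≠ 0 → ∃ v, IsAlignedDual N u v) : OrthantMonotonic N := by
  intro x x' habs hsgn
  rcases eq_or_ne x 0 with rfl | hx
  · rw [hN.map_zero]
    exact hN.nonneg x'
  obtain ⟨v, hv⟩ := H x hx
  exact hv.apply_le_of_abs_le hN habs hsgn

theorem orthantStrictlyMonotonic_of_forall_isAlignedDual (hN : IsNorm N)
    (H : ∀ u, u ≠ 0 → ∃ v, IsAlignedDual N u v) : OrthantStrictlyMonotonic N := by
  intro x x' habs ⟨j, hj⟩ hsgn
  have hmj : x j + x' j ≠ 0 := add_ne_zero_of_abs_lt hj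
  obtain ⟨v, hv⟩ := H (x + x') fun h => hmj (congrFun h j)
  have hx'v : ∀ i, 0 ≤ x' i * v i :=
    hv.mul_nonneg_of_mul_nonneg fun i => by
      simp only [Pi.add_apply]
      nlinarith [hsgn i, mul_self_nonneg (x' i)]
  have hlt : dot x v < dot x' v :=
    dot_lt_dot_of_abs_lt habs hsgn hx'v hj (hv.ne_zero_of_ne_zero hmj)
  have h2x : N ((2 : ℝ) • x) ≤ N (x + x') := by
    refine orthantMonotonic_of_forall_isAlignedDual hN H _ _ (fun i => ?_) (fun i => ?_)
    · rw [Pi.smul_apply, smul_eq_mul, abs_mul, abs_two, Pi.add_apply,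
        (abs_add_eq_add_abs_iff _ _).mpr (mul_nonneg_iff.mp (hsgn i))]
      linarith [habs i]
    · simp only [Pi.smul_apply, Pi.add_apply, smul_eq_mul]
      nlinarith [hsgn i, mul_self_nonneg (x i)]
  have hD := hv.dualNorm_pos hN
  refine lt_of_mul_lt_mul_right ?_ hD.le
  suffices 2 * (N x * dualNorm N v) < 2 * (N x' * dualNorm N v) by linarith
  calc 2 * (N x * dualNorm N v) = N ((2 : ℝ) • x) * dualNorm N v := by
        rw [hN.map_smul, abs_two, mul_assoc]
    _ ≤ N (x + x') * dualNorm N v := mul_le_mul_of_nonneg_right h2x hD.le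
    _ = dot x v + dot x' v := by rw [← hv.2.2.2, dot_add_left]
    _ < 2 * dot x' v := by linarith
    _ ≤ 2 * (N x' * dualNorm N v) := by gcongr; exact dot_le_mul_dualNorm hN hD x'

end converse

section forward

variable {N : (Fin d → ℝ) → ℝ}

theorem OrthantStrictlyMonotonic.orthantMonotonic (h : OrthantStrictlyMonotonic N) :
    OrthantMonotonic N := by
  intro x x' habs hsgn
  by_cases hlt : ∃ j, |x j| < |x' j|
  · exact (h x x' habs hlt hsgn).le
  · have habs_eq : ∀ i, |x i| = |x' i| := fun i =>
      (habs i).antisymm (not_lt.mp fun h => hlt ⟨i, h⟩)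
    have hxx' : x = x' := funext fun i => by
      rcases abs_eq_abs.mp (habs_eq i) with h | h
      · exact h
      · have : x' i = 0 := by nlinarith [hsgn i]
        rw [h, this, neg_zero]
    rw [hxx']

theorem OrthantMonotonic.apply_proj_le (h : OrthantMonotonic N) (K : Finset (Fin d))
    (x : Fin d → ℝ) : N (proj K x) ≤ N x :=
  h _ _ (fun i => by by_cases hi : i ∈ K <;> simp [proj, hi])
    (fun i => by by_cases hi : i ∈ K <;> simp [proj, hi, mul_self_nonneg])

theorem OrthantStrictlyMonotonic.apply_update_zero_lt (h : OrthantStrictlyMonotonic N)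
    {u : Fin d → ℝ} {j : Fin d} (hj : u j ≠ 0) : N (Function.update u j 0) < N u :=
  h _ _ (fun i => by by_cases hi : i = j <;> simp [hi])
    ⟨j, by simpa using hj⟩ (fun i => by by_cases hi : i = j <;> simp [hi, mul_self_nonneg])

theorem OrthantStrictlyMonotonic.exists_isAlignedDual (hN : IsNorm N)
    (h : OrthantStrictlyMonotonic N) {u : Fin d → ℝ} (hu : u ≠ 0) :
    ∃ v, IsAlignedDual N u v := by
  obtain ⟨w, hwu, hw⟩ := exists_dot_eq_and_forall_dot_le hN hu
  set v := proj {i | u i ≠ 0} w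
  have hle : ∀ x, dot x v ≤ N x := fun x => by
    rw [dot_proj_right]
    exact (hw _).trans (h.orthantMonotonic.apply_proj_le _ x)
  have huv : dot u v = N u := by rw [dot_proj_right, proj_support_self, hwu]
  have hpos : ∀ i, u i ≠ 0 → 0 < u i * v i := fun i hi => by
    have := hle (Function.update u i 0)
    rw [dot_update_zero_left, huv] at this
    linarith [h.apply_update_zero_lt hi]
  have hzero : ∀ i, u i = 0 → v i = 0 := fun i hi => by simp [v, proj, hi]
  refine ⟨v, ?_, ?_, fun i => ?_, by rw [huv, dualNorm_eq_one hN hu huv hle, mul_one]⟩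
  · obtain ⟨j, hj⟩ := Function.ne_iff.mp hu
    exact fun hv => (hpos j hj).ne' (by simp [hv])
  · ext i
    by_cases hi : u i = 0
    · simp [hi, hzero i hi]
    · simp [hi, right_ne_zero_of_mul (hpos i hi).ne']
  · by_cases hi : u i = 0
    · simp [hi]
    · exact (hpos i hi).le

end forward

theorem orthantStrictlyMonotonic_iff_dual_vector_general
    (N : (Fin d → ℝ) → ℝ) (hN : IsNorm N) :
    OrthantStrictlyMonotonic N ↔
      ∀ u : Fin d → ℝ, u ≠ 0 → ∃ v : Fin d → ℝ, v ≠ 0 ∧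
        {i | v i ≠ 0} = {i | u i ≠ 0} ∧ (∀ i, 0 ≤ u i * v i) ∧
        dot u v = N u * dualNorm N v :=
  ⟨fun h _ hu => h.exists_isAlignedDual hN hu, orthantStrictlyMonotonic_of_forall_isAlignedDual hN⟩

/-- a norm is orthant-strictly monotonic iff every nonzero vector
`u` admits a nonzero `⦀·⦀`-dual vector `v` with the same support and
`u i * v i ≥ 0` for all `i`. -/
theorem orthantStrictlyMonotonic_iff_dual_vector
    (hd : 0 < d) (N : (Fin d → ℝ) → ℝ) (hN : IsNorm N) :
    OrthantStrictlyMonotonic N ↔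
      ∀ u : Fin d → ℝ, u ≠ 0 → ∃ v : Fin d → ℝ, v ≠ 0 ∧
        {i | v i ≠ 0} = {i | u i ≠ 0} ∧ (∀ i, 0 ≤ u i * v i) ∧
        dot u v = N u * dualNorm N v :=
  orthantStrictlyMonotonic_iff_dual_vector_general N hN

end OSMPaper
end

section
/- If a norm ⦀·⦀ on ℝ^d is orthant-strictly monotonic, then for every i ∈ {1,…,d} the renormalized canonical basis vector e_i/⦀e_i⦀ is an exposed point of the unit ball B = {x ∈ ℝ^d : ⦀x⦀ ≤ 1}, i.e., there exists a supporting hyperplane H to B at e_i/⦀e_i⦀ with H ∩ B = {e_i/⦀e_i⦀}. -/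
open Finset Set

namespace OSMPaper

variable {d : ℕ}

/-- if a norm is orthant-strictly monotonic, then each renormalized
canonical basis vector `e_i / ⦀e_i⦀` is an exposed point of the unit ball:
there is a supporting hyperplane `H` to the unit ball at that point with
`H ∩ B = {e_i / ⦀e_i⦀}`. -/
theorem orthantStrictlyMonotonic_renormalized_basis_exposed
    (hd : 0 < d) (N : (Fin d → ℝ) → ℝ) (hN : IsNorm N)
    (hosm : OrthantStrictlyMonotonic N) (i : Fin d)
    (e : Fin d → ℝ) (he : e = Pi.single i (1 : ℝ))
    (p : Fin d → ℝ) (hp : p = (N e)⁻¹ • e) :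
    ∃ y : Fin d → ℝ, y ≠ 0 ∧
      (∀ x, N x ≤ 1 → dot x y ≤ dot p y) ∧
      {x | dot x y = dot p y} ∩ {x | N x ≤ 1} = {p} := by
  obtain ⟨hN0, hNz, hNs, hNt⟩ := hN
  have hei : e i = 1 := by rw [he]; simp
  have hej : ∀ j, j ≠ i → e j = 0 := by
    intro j hj; rw [he]; simp [Pi.single_apply, hj]
  have hene : e ≠ 0 := by
    intro h; have := congrFun h i; rw [hei] at this; simp at this
  have hNe : 0 < N e :=
    lt_of_le_of_ne (hN0 e) (fun h => hene ((hNz e).mp h.symm))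
  have hdot : ∀ (x : Fin d → ℝ) (c : ℝ), dot x (c • e) = c * x i := by
    intro x c
    unfold dot
    rw [Finset.sum_eq_single i]
    · simp only [Pi.smul_apply, hei, smul_eq_mul]; ring
    · intro j _ hj; simp [Pi.smul_apply, hej j hj]
    · simp
  set y := N e • e with hy
  have hpi : p i = (N e)⁻¹ := by rw [hp]; simp [hei]
  have hpj : ∀ j, j ≠ i → p j = 0 := by
    intro j hj; rw [hp]; simp [hej j hj]
  have hNp : N p = 1 := by
    rw [hp, hNs, abs_of_pos (inv_pos.mpr hNe), inv_mul_cancel₀ hNe.ne']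
  have hdpy : dot p y = 1 := by
    rw [hy, hdot, hpi, mul_inv_cancel₀ hNe.ne']
  have key : ∀ x : Fin d → ℝ, |x i| * N e ≤ N x := by
    intro x
    have hz : N (x i • e) = |x i| * N e := hNs _ _
    by_cases hxz : x = x i • e
    · rw [← hz, ← hxz]
    · have hlt : N (x i • e) < N x := by
        apply hosm
        · intro j
          by_cases hji : j = i
          · subst hji; simp [hei]
          · simp [hej j hji]
        · obtain ⟨j, hj⟩ : ∃ j, x j ≠ (x i • e) j := by
            by_contra h; push_neg at h; exact hxz (funext h)
          have hji : j ≠ i := by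
            intro h; subst h; simp [hei] at hj
          refine ⟨j, ?_⟩
          have : (x i • e) j = 0 := by simp [hej j hji]
          rw [this, abs_zero]
          rw [this] at hj
          exact abs_pos.mpr hj
        · intro j
          by_cases hji : j = i
          · subst hji; simp only [Pi.smul_apply, hei, smul_eq_mul, mul_one]
            exact mul_self_nonneg _
          · simp [hej j hji]
      linarith [hz ▸ hlt]
  refine ⟨y, ?_, ?_, ?_⟩
  · intro h
    have := congrFun h i
    simp only [hy, Pi.smul_apply, hei, smul_eq_mul, mul_one, Pi.zero_apply] at this
    exact hNe.ne' this
  · intro x hx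
    rw [hy, hdot, hdpy]
    have h1 := key x
    have h2 : x i ≤ |x i| := le_abs_self _
    nlinarith
  · ext x
    simp only [Set.mem_inter_iff, Set.mem_setOf_eq, Set.mem_singleton_iff]
    constructor
    · rintro ⟨hdx, hx⟩
      rw [hy, hdot, hdpy] at hdx
      have hxi : x i = (N e)⁻¹ := by
        field_simp at hdx ⊢; linarith
      by_contra hxp
      obtain ⟨j, hj⟩ : ∃ j, x j ≠ p j := by
        by_contra h; push_neg at h; exact hxp (funext h)
      have hji : j ≠ i := by
        intro h; subst h; rw [hxi, hpi] at hj; exact hj rfl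
      have hlt : N p < N x := by
        apply hosm
        · intro k
          by_cases hki : k = i
          · subst hki; rw [hpi, hxi]
          · simp [hpj k hki]
        · refine ⟨j, ?_⟩
          rw [hpj j hji, abs_zero]
          rw [hpj j hji] at hj
          exact abs_pos.mpr hj
        · intro k
          by_cases hki : k = i
          · subst hki; rw [hpi, hxi]; positivity
          · simp [hpj k hki]
      rw [hNp] at hlt; linarith
    · rintro rfl
      exact ⟨rfl, le_of_eq hNp⟩

end OSMPaper
end

section
/- If a norm ⦀·⦀ on ℝ^d is orthant-monotonic and the normed space (ℝ^d, ⦀·⦀) is strictly convex (every point of the unit sphere is an extreme point of the unit ball), then the norm ⦀·⦀ is orthant-strictly monotonic. -/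
open Finset Set

namespace OSMPaper

variable {d : ℕ}

/-- Pointwise midpoint lemma: if `|a| ≤ |b|` and `a*b ≥ 0`, then the midpoint
`(a+b)/2` dominates `a` in the orthant sense. -/
lemma mid_aux (a b : ℝ) (h1 : |a| ≤ |b|) (h2 : 0 ≤ a * b) :
    |a| ≤ |2⁻¹ * (a + b)| ∧ 0 ≤ a * (2⁻¹ * (a + b)) := by
  rcases le_or_gt 0 b with hb | hb
  · have ha : 0 ≤ a := by
      by_contra h
      push_neg at h
      have hb0 : b = 0 := by nlinarith
      rw [hb0, abs_zero] at h1
      have : a = 0 := abs_nonpos_iff.mp h1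
      exact absurd this h.ne
    have hab : a ≤ b := by
      rwa [abs_of_nonneg ha, abs_of_nonneg hb] at h1
    rw [abs_of_nonneg ha, abs_of_nonneg (by linarith : (0:ℝ) ≤ 2⁻¹ * (a + b))]
    constructor
    · linarith
    · apply mul_nonneg ha; linarith
  · have ha : a ≤ 0 := by
      by_contra h
      push_neg at h
      nlinarith
    have hab : b ≤ a := by
      rw [abs_of_nonpos ha, abs_of_nonpos hb.le] at h1
      linarith
    rw [abs_of_nonpos ha, abs_of_nonpos (by linarith : 2⁻¹ * (a + b) ≤ 0)]
    constructor
    · linarith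
    · nlinarith

/-- an orthant-monotonic norm whose normed space is strictly convex
(every unit-sphere point is an extreme point of the unit ball) is
orthant-strictly monotonic. -/
theorem orthantMonotonic_strictlyConvex_imp_orthantStrictlyMonotonic
    (hd : 0 < d) (N : (Fin d → ℝ) → ℝ) (hN : IsNorm N)
    (hom : OrthantMonotonic N)
    (hsc : ∀ x : Fin d → ℝ, N x = 1 → ExtremePt {z | N z ≤ 1} x) :
    OrthantStrictlyMonotonic N := by
  obtain ⟨hpos, hzero, hsmul, htri⟩ := hN
  intro x x' hle hstrict hsign
  obtain ⟨j, hj⟩ := hstrict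
  by_contra hcon
  push_neg at hcon
  have heq : N x = N x' := le_antisymm (hom x x' hle hsign) hcon
  have hx'ne : x' ≠ 0 := by
    intro h
    rw [h] at hj
    simp only [Pi.zero_apply, abs_zero] at hj
    exact absurd hj (not_lt.2 (abs_nonneg _))
  have hcpos : 0 < N x' :=
    lt_of_le_of_ne (hpos x') (fun h => hx'ne ((hzero x').1 h.symm))
  set c : ℝ := N x' with hc
  set m : Fin d → ℝ := (2⁻¹ : ℝ) • (x + x') with hm
  have hmi : ∀ i, m i = 2⁻¹ * (x i + x' i) := by
    intro i; simp [hm]; ring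
  have h1 : N x ≤ N m := by
    apply hom x m
    · intro i
      rw [hmi i]
      exact (mid_aux (x i) (x' i) (hle i) (hsign i)).1
    · intro i
      rw [hmi i]
      exact (mid_aux (x i) (x' i) (hle i) (hsign i)).2
  have h2 : N m ≤ c := by
    have ht := htri ((2⁻¹ : ℝ) • x) ((2⁻¹ : ℝ) • x')
    rw [hsmul, hsmul] at ht
    have hmeq : m = (2⁻¹ : ℝ) • x + (2⁻¹ : ℝ) • x' := by rw [hm, smul_add]
    have h25 : |(2⁻¹ : ℝ)| = 2⁻¹ := by norm_num
    rw [h25] at ht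
    rw [hmeq]
    calc N ((2⁻¹ : ℝ) • x + (2⁻¹ : ℝ) • x') ≤ 2⁻¹ * N x + 2⁻¹ * N x' := ht
      _ = c := by rw [heq]; ring
  have hNm : N m = c := le_antisymm h2 (by rw [← heq] at hc ⊢; linarith)
  have hcinv : |c⁻¹| = c⁻¹ := abs_of_pos (inv_pos.2 hcpos)
  have hunit : N (c⁻¹ • m) = 1 := by
    rw [hsmul, hNm, hcinv, inv_mul_cancel₀ hcpos.ne']
  obtain ⟨_, hext⟩ := hsc _ hunit
  have hx1 : N (c⁻¹ • x) ≤ 1 := by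
    rw [hsmul, hcinv, heq, inv_mul_cancel₀ hcpos.ne']
  have hx'1 : N (c⁻¹ • x') ≤ 1 := by
    rw [hsmul, hcinv, inv_mul_cancel₀ hcpos.ne']
  have hdecomp : c⁻¹ • m = (2⁻¹ : ℝ) • (c⁻¹ • x) + (1 - (2⁻¹ : ℝ)) • (c⁻¹ • x') := by
    rw [hm]
    module
  obtain ⟨hy, hz⟩ := hext _ hx1 _ hx'1 (2⁻¹ : ℝ) (by norm_num) (by norm_num) hdecomp
  have hxx' : x = x' :=
    smul_right_injective (Fin d → ℝ) (inv_ne_zero hcpos.ne') (hy.trans hz.symm)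
  rw [hxx'] at hj
  exact lt_irrefl _ hj

end OSMPaper
end

section
/- Let ⦀·⦀ be a norm on ℝ^d that is permutation invariant (⦀x∘ν⦀ = ⦀x⦀ for every permutation ν of the coordinates) and monotonic. Then for every k ∈ {1,…,d} and every x ∈ ℝ^d, the generalized top-k norm satisfies ⦀x⦀^top_k = ⦀ x↓_{\{1,…,k\}} ⦀, where x↓ ∈ ℝ^d is the vector whose entries are the absolute values of the entries of x arranged in nonincreasing order, and x↓_{\{1,…,k\}} is the vector coinciding with x↓ on the first k coordinates and zero elsewhere. -/
open Finset Set

namespace OSMPaper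

variable {d : ℕ}

lemma le_of_strictMono {m : ℕ} (f : Fin m → Fin d) (hf : StrictMono f) :
    ∀ j : Fin m, (j : ℕ) ≤ (f j : ℕ) := by
  have H : ∀ n : ℕ, ∀ h : n < m, n ≤ (f ⟨n, h⟩ : ℕ) := by
    intro n
    induction n with
    | zero => intro h; exact Nat.zero_le _
    | succ n ih =>
      intro h
      have h' : n < m := Nat.lt_of_succ_lt h
      have hlt : f ⟨n, h'⟩ < f ⟨n+1, h⟩ := hf (by simp [Fin.lt_def])
      have := ih h'
      omega
  intro j
  have := H j j.isLt
  simpa using this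

lemma card_filter_lt {m : ℕ} (hmd : m ≤ d) :
    (Finset.univ.filter fun i : Fin d => (i : ℕ) < m).card = m := by
  have h : ∀ a ∈ Finset.range m, a < d := fun a ha =>
    lt_of_lt_of_le (Finset.mem_range.mp ha) hmd
  have : (Finset.univ.filter fun i : Fin d => (i : ℕ) < m) =
      (Finset.range m).attachFin h := by
    ext i
    simp [Finset.mem_attachFin]
  rw [this, Finset.card_attachFin, Finset.card_range]

/-- for a permutation invariant and monotonic source norm, the
generalized top-k norm of `x` is the norm of the vector of the `k` largest
absolute values of the entries of `x` (completed by zeros). -/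
theorem topNorm_of_permutation_invariant_monotonic
    (hd : 0 < d) (N : (Fin d → ℝ) → ℝ) (hN : IsNorm N)
    (hperm : ∀ (ν : Equiv.Perm (Fin d)) (x : Fin d → ℝ),
      N (fun i => x (ν i)) = N x)
    (hmono : ∀ x x' : Fin d → ℝ, (∀ i, |x i| ≤ |x' i|) → N x ≤ N x')
    (k : ℕ) (hk1 : 1 ≤ k) (hkd : k ≤ d) (x : Fin d → ℝ)
    (ν : Equiv.Perm (Fin d))
    (hν : ∀ i j : Fin d, i ≤ j → |x (ν j)| ≤ |x (ν i)|) :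
    topNorm N k x =
      N (proj (Finset.univ.filter fun i : Fin d => (i : ℕ) < k)
          (fun i => |x (ν i)|)) := by
  set y : Fin d → ℝ := fun i => |x (ν i)| with hy
  set Ik : Finset (Fin d) := Finset.univ.filter fun i : Fin d => (i : ℕ) < k with hIk
  set R : ℝ := N (proj Ik y) with hR
  set S : Set ℝ := {r | ∃ K : Finset (Fin d), K.card ≤ k ∧ r = N (proj K x)} with hS
  -- Upper bound: every element of S is ≤ R
  have hub : ∀ r ∈ S, r ≤ R := by
    rintro r ⟨K, hK, rfl⟩
    set m := K.card with hm
    have hmd : m ≤ d := le_trans hK hkd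
    set K' : Finset (Fin d) := K.image ν.symm with hK'
    have hmemK' : ∀ i : Fin d, i ∈ K' ↔ ν i ∈ K := by
      intro i
      simp only [hK', Finset.mem_image]
      constructor
      · rintro ⟨a, ha, rfl⟩; simpa using ha
      · intro h; exact ⟨ν i, h, by simp⟩
    have hcardK' : K'.card = m := by
      rw [hK', Finset.card_image_of_injective _ ν.symm.injective]
    set Im : Finset (Fin d) := Finset.univ.filter fun i : Fin d => (i : ℕ) < m with hIm
    have hcardIm : Im.card = m := card_filter_lt hmd
    -- order iso between Im and K'
    set e : {i : Fin d // i ∈ Im} ≃ {i : Fin d // i ∈ K'} :=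
      ((Im.orderIsoOfFin hcardIm).symm.trans (K'.orderIsoOfFin hcardK')).toEquiv with he
    set σ : Equiv.Perm (Fin d) := e.extendSubtype with hσ
    -- key: for i ∈ Im, σ i ∈ K' and i ≤ σ i
    have hkey : ∀ i : Fin d, i ∈ Im → σ i ∈ K' ∧ (i : ℕ) ≤ (σ i : ℕ) := by
      intro i hi
      have h1 : σ i = (e ⟨i, hi⟩ : Fin d) := by
        rw [hσ, Equiv.extendSubtype_apply_of_mem]
      have h2 : (e ⟨i, hi⟩ : Fin d) ∈ K' := (e ⟨i, hi⟩).2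
      refine ⟨h1 ▸ h2, ?_⟩
      set a : Fin m := (Im.orderIsoOfFin hcardIm).symm ⟨i, hi⟩ with ha
      have hia : (i : ℕ) = (a : ℕ) := by
        have h3 : (Im.orderIsoOfFin hcardIm a : Fin d) = i := by
          rw [ha, OrderIso.apply_symm_apply]
        -- Im.orderEmbOfFin at a is ⟨a, _⟩
        have h4 : ∀ b : Fin m, (Im.orderEmbOfFin hcardIm b : ℕ) = (b : ℕ) := by
          have huniq := Finset.orderEmbOfFin_unique (f := fun b : Fin m => (⟨(b : ℕ), lt_of_lt_of_le b.isLt hmd⟩ : Fin d)) hcardIm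
            (by intro b; simp only [hIm, Finset.mem_filter]; exact ⟨Finset.mem_univ _, b.isLt⟩)
            (fun b c hbc => Fin.mk_lt_mk.mpr hbc)
          intro b
          exact (congrArg Fin.val (congrFun huniq b)).symm
        have := h4 a
        rw [← Finset.coe_orderIsoOfFin_apply, h3] at this
        omega
      have h5 : (a : ℕ) ≤ ((K'.orderIsoOfFin hcardK' a : Fin d) : ℕ) := by
        have : StrictMono (fun b : Fin m => (K'.orderEmbOfFin hcardK' b : Fin d)) :=
          (K'.orderEmbOfFin hcardK').strictMono
        have := le_of_strictMono _ this a
        simpa [Finset.coe_orderIsoOfFin_apply] using this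
      have h6 : (e ⟨i, hi⟩ : Fin d) = (K'.orderIsoOfFin hcardK' a : Fin d) := rfl
      rw [h1, h6]
      omega
    have hnotkey : ∀ i : Fin d, i ∉ Im → σ i ∉ K' := by
      intro i hi
      exact Equiv.extendSubtype_not_mem e i hi
    -- N (proj K x) = N (proj K' (x∘ν))
    set w : Fin d → ℝ := fun i => x (ν i) with hw
    have step1 : N (proj K x) = N (proj K' w) := by
      rw [← hperm ν (proj K x)]
      congr 1
      funext i
      simp only [proj, hmemK' i, hw]
    have step2 : N (proj K' w) = N (fun i => proj K' w (σ i)) := (hperm σ _).symm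
    have step3 : N (fun i => proj K' w (σ i)) ≤ R := by
      apply hmono
      intro i
      by_cases hi : i ∈ Im
      · obtain ⟨hσK', hile⟩ := hkey i hi
        have him : (i : ℕ) < m := by simpa [hIm] using hi
        have hik : i ∈ Ik := by simp [hIk]; omega
        simp only [proj, if_pos hσK', if_pos hik]
        have : |w (σ i)| ≤ |w i| := hν i (σ i) (by rwa [Fin.le_def])
        have hyi : |y i| = |x (ν i)| := by simp [hy]
        calc |w (σ i)| ≤ |w i| := this
          _ = |y i| := by simp [hw, hy]
      · have := hnotkey i hi
        simp only [proj, if_neg this]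
        simp [abs_nonneg]
    calc N (proj K x) = N (fun i => proj K' w (σ i)) := by rw [step1, step2]
      _ ≤ R := step3
  -- Membership: R ∈ S
  have hmem : R ∈ S := by
    set K : Finset (Fin d) := Ik.image ν with hKdef
    refine ⟨K, ?_, ?_⟩
    · calc K.card ≤ Ik.card := Finset.card_image_le
        _ = k := card_filter_lt hkd
        _ ≤ k := le_refl k
    · have hmemK : ∀ i : Fin d, ν i ∈ K ↔ i ∈ Ik := by
        intro i
        simp only [hKdef, Finset.mem_image]
        constructor
        · rintro ⟨a, ha, hai⟩; rwa [← ν.injective hai]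
        · intro h; exact ⟨i, h, rfl⟩
      have : N (proj K x) = N (proj Ik y) := by
        rw [← hperm ν (proj K x)]
        have habs : ∀ i, |proj K x (ν i)| = |proj Ik y i| := by
          intro i
          simp only [proj, hmemK i, hy]
          by_cases h : i ∈ Ik <;> simp [h, abs_abs]
        exact le_antisymm (hmono _ _ (fun i => (habs i).le))
          (hmono _ _ (fun i => (habs i).ge))
      exact this.symm
  -- conclude
  have hne : S.Nonempty := ⟨R, hmem⟩
  have hbdd : BddAbove S := ⟨R, hub⟩
  exact le_antisymm (csSup_le hne hub) (le_csSup hbdd hmem)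


end OSMPaper
end

section
/- If a norm ⦀·⦀ on ℝ^d is orthant-monotonic, then for every k ∈ {1,…,d} both the generalized top-k norm and the generalized k-support norm are orthant-monotonic. -/
open Finset Set

namespace OSMPaper

variable {d : ℕ}

lemma topSet_finite (N : (Fin d → ℝ) → ℝ) (k : ℕ) (x : Fin d → ℝ) :
    {r | ∃ K : Finset (Fin d), K.card ≤ k ∧ r = N (proj K x)}.Finite := by
  apply Set.Finite.subset (Set.finite_range (fun K : Finset (Fin d) => N (proj K x)))
  rintro r ⟨K, _, rfl⟩; exact ⟨K, rfl⟩

lemma topSet_nonempty (N : (Fin d → ℝ) → ℝ) (k : ℕ) (x : Fin d → ℝ) :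
    {r | ∃ K : Finset (Fin d), K.card ≤ k ∧ r = N (proj K x)}.Nonempty :=
  ⟨N (proj ∅ x), ∅, by simp, rfl⟩

lemma topNorm_OM (N : (Fin d → ℝ) → ℝ) (hom : OrthantMonotonic N) (k : ℕ) :
    OrthantMonotonic (topNorm N k) := by
  intro x x' h1 h2
  apply csSup_le (topSet_nonempty N k x)
  rintro r ⟨K, hK, rfl⟩
  calc N (proj K x) ≤ N (proj K x') := by
        apply hom
        · intro i; simp only [proj]; split <;> simp [h1 i]
        · intro i; simp only [proj]; split <;> simp [h2 i]
    _ ≤ topNorm N k x' := le_csSup (topSet_finite N k x').bddAbove ⟨K, hK, rfl⟩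

lemma proj_singleton (x : Fin d → ℝ) (i : Fin d) :
    proj {i} x = x i • (Pi.single i 1 : Fin d → ℝ) := by
  funext j
  simp only [proj, Finset.mem_singleton, Pi.smul_apply, Pi.single_apply, smul_eq_mul]
  by_cases h : j = i <;> simp [h]

lemma single_pos (N : (Fin d → ℝ) → ℝ) (hN : IsNorm N) (i : Fin d) :
    0 < N (Pi.single i 1) := by
  rcases (hN.1 (Pi.single i 1)).lt_or_eq with h | h
  · exact h
  · exfalso
    have := (hN.2.1 (Pi.single i 1)).1 h.symm
    have := congrFun this i
    simp at this

lemma coord_bound (N : (Fin d → ℝ) → ℝ) (hN : IsNorm N) (k : ℕ) (hk1 : 1 ≤ k)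
    (x : Fin d → ℝ) (hx : topNorm N k x ≤ 1) (i : Fin d) :
    |x i| ≤ (N (Pi.single i 1))⁻¹ := by
  have hNs := single_pos N hN i
  have hmem : N (proj {i} x) ∈ {r | ∃ K : Finset (Fin d), K.card ≤ k ∧ r = N (proj K x)} :=
    ⟨{i}, by simpa using hk1, rfl⟩
  have h1 : N (proj {i} x) ≤ 1 :=
    le_trans (le_csSup (topSet_finite N k x).bddAbove hmem) hx
  rw [proj_singleton, hN.2.2.1] at h1
  rw [inv_eq_one_div, le_div_iff₀ hNs]
  exact h1

lemma dot_bound (N : (Fin d → ℝ) → ℝ) (hN : IsNorm N) (k : ℕ) (hk1 : 1 ≤ k)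
    (x y : Fin d → ℝ) (hx : topNorm N k x ≤ 1) :
    dot x y ≤ ∑ i, (N (Pi.single i 1))⁻¹ * |y i| := by
  refine Finset.sum_le_sum fun i _ => ?_
  calc x i * y i ≤ |x i * y i| := le_abs_self _
    _ = |x i| * |y i| := abs_mul _ _
    _ ≤ (N (Pi.single i 1))⁻¹ * |y i| :=
        mul_le_mul_of_nonneg_right (coord_bound N hN k hk1 x hx i) (abs_nonneg _)

lemma dualSet_bddAbove (N : (Fin d → ℝ) → ℝ) (hN : IsNorm N) (k : ℕ) (hk1 : 1 ≤ k)
    (y : Fin d → ℝ) :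
    BddAbove {r | ∃ x, topNorm N k x ≤ 1 ∧ r = dot x y} := by
  refine ⟨∑ i, (N (Pi.single i 1))⁻¹ * |y i|, ?_⟩
  rintro r ⟨x, hx, rfl⟩
  exact dot_bound N hN k hk1 x y hx

lemma topNorm_zero_le (N : (Fin d → ℝ) → ℝ) (hN : IsNorm N) (k : ℕ) :
    topNorm N k (0 : Fin d → ℝ) ≤ 1 := by
  apply csSup_le (topSet_nonempty N k 0)
  rintro r ⟨K, _, rfl⟩
  have hp : proj K (0 : Fin d → ℝ) = 0 := by funext j; simp [proj]
  rw [hp, (hN.2.1 0).2 rfl]; norm_num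

lemma dualSet_nonempty (N : (Fin d → ℝ) → ℝ) (hN : IsNorm N) (k : ℕ) (y : Fin d → ℝ) :
    {r | ∃ x, topNorm N k x ≤ 1 ∧ r = dot x y}.Nonempty :=
  ⟨0, 0, topNorm_zero_le N hN k, by simp [dot]⟩

/-- if the source norm is orthant-monotonic, then so are the
generalized top-k norm and the generalized k-support norm. -/
theorem topNorm_and_supportNorm_orthantMonotonic
    (hd : 0 < d) (N : (Fin d → ℝ) → ℝ) (hN : IsNorm N)
    (hom : OrthantMonotonic N) (k : ℕ) (hk1 : 1 ≤ k) (hkd : k ≤ d) :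
    OrthantMonotonic (topNorm N k) ∧ OrthantMonotonic (supportNorm N k) := by
  have hT := topNorm_OM N hom k
  refine ⟨hT, ?_⟩
  intro y y' h1 h2
  apply csSup_le (dualSet_nonempty N hN k y)
  rintro r ⟨x, hx, rfl⟩
  set z : Fin d → ℝ := fun i => if y' i = 0 then 0 else x i * (y i / y' i) with hz
  have hc : ∀ i, ∃ c : ℝ, 0 ≤ c ∧ c ≤ 1 ∧ z i = c * x i := by
    intro i
    by_cases h : y' i = 0
    · exact ⟨0, le_refl _, by norm_num, by simp [hz, h]⟩
    · refine ⟨y i / y' i, ?_, ?_, by simp [hz, h]; ring⟩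
      · have : y i / y' i = y i * y' i / (y' i)^2 := by field_simp
        rw [this]
        exact div_nonneg (h2 i) (sq_nonneg _)
      · have habs : |y i / y' i| ≤ 1 := by
          rw [abs_div, div_le_one (abs_pos.2 h)]
          exact h1 i
        exact le_trans (le_abs_self _) habs
  have hTz : topNorm N k z ≤ 1 := by
    refine le_trans (hT z x ?_ ?_) hx
    · intro i
      obtain ⟨c, hc0, hc1, hzi⟩ := hc i
      rw [hzi, abs_mul, abs_of_nonneg hc0]
      calc c * |x i| ≤ 1 * |x i| := mul_le_mul_of_nonneg_right hc1 (abs_nonneg _)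
        _ = |x i| := one_mul _
    · intro i
      obtain ⟨c, hc0, _, hzi⟩ := hc i
      rw [hzi]
      have : c * x i * x i = c * (x i * x i) := by ring
      rw [this]
      exact mul_nonneg hc0 (mul_self_nonneg _)
  have hdot : dot x y = dot z y' := by
    apply Finset.sum_congr rfl
    intro i _
    by_cases h : y' i = 0
    · have hy : y i = 0 := by
        have := h1 i
        rw [h, abs_zero] at this
        exact abs_eq_zero.1 (le_antisymm this (abs_nonneg _))
      simp [hz, h, hy]
    · simp only [hz, h, if_neg h]
      field_simp
  rw [hdot]
  exact le_csSup (dualSet_bddAbove N hN k hk1 y') ⟨z, hTz, rfl⟩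


end OSMPaper
end
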